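/- Assume in addition k > 3/ε. Then ι_ε^k(u) = 1/ε for every u ∈ (2/k, ε − 1/k], and ι_ε^k(u) = 0 for every u ∈ (ε + 1/k, 1]. In particular, ι_ε^k differs from ι_ε = ε^{−1} 1_{[0,ε]} only on the set (0, 2/k] ∪ (ε − 1/k, ε + 1/k]. -/

import Mathlib

open MeasureTheory Set

/-- `g_ε^{k,+}(z) = k[1_{(0,1/k]}(z) − 1_{(1/k,2/k]}(z)]`. -/
noncomputable def gPlus (k : ℕ) (z : ℝ) : ℝ :=
  (k:ℝ) * ((Set.Ioc (0:ℝ) (1/(k:ℝ))).indicator (fun _ => (1:ℝ)) z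
    - (Set.Ioc (1/(k:ℝ)) (2/(k:ℝ))).indicator (fun _ => (1:ℝ)) z)

/-- `g_ε^{k,−}(z) = k[1_{(ε−1/k,ε]}(z) − 1_{(ε,ε+1/k]}(z)]`. -/
noncomputable def gMinus (ε : ℝ) (k : ℕ) (z : ℝ) : ℝ :=
  (k:ℝ) * ((Set.Ioc (ε - 1/(k:ℝ)) ε).indicator (fun _ => (1:ℝ)) z
    - (Set.Ioc ε (ε + 1/(k:ℝ))).indicator (fun _ => (1:ℝ)) z)

/-- The normalizing constant `c_ε^{k,+}`. -/
noncomputable def cPlus (W : StieltjesFunction ℝ) (ε : ℝ) (k : ℕ) : ℝ :=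
  ε⁻¹ * (∫ y in Set.Ioc (0:ℝ) 1, (∫ z in (0:ℝ)..y, gPlus k z) ∂W.measure)⁻¹

/-- The normalizing constant `c_ε^{k,−}`. -/
noncomputable def cMinus (W : StieltjesFunction ℝ) (ε : ℝ) (k : ℕ) : ℝ :=
  ε⁻¹ * (∫ y in Set.Ioc (0:ℝ) 1, (∫ z in (0:ℝ)..y, gMinus ε k z) ∂W.measure)⁻¹

/-- `g_ε^k = c_ε^{k,+} g_ε^{k,+} − c_ε^{k,−} g_ε^{k,−}`. -/
noncomputable def gEpsK (W : StieltjesFunction ℝ) (ε : ℝ) (k : ℕ) (z : ℝ) : ℝ :=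
  cPlus W ε k * gPlus k z - cMinus W ε k * gMinus ε k z

/-- `ι_ε^k(u) = ∫_{(0,u]} (∫₀^y g_ε^k(z) dz) W(dy)`. -/
noncomputable def iotaK (W : StieltjesFunction ℝ) (ε : ℝ) (k : ℕ) (u : ℝ) : ℝ :=
  ∫ y in Set.Ioc (0:ℝ) u, (∫ z in (0:ℝ)..y, gEpsK W ε k z) ∂W.measure

/-- The approximation of the identity `ι_ε = ε⁻¹ 1_{[0,ε]}`. -/
noncomputable def iotaEps (ε : ℝ) (y : ℝ) : ℝ :=
  ε⁻¹ * (Set.Icc (0:ℝ) ε).indicator (fun _ => (1:ℝ)) y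

/-! The primitives `y ↦ ∫₀^y g_ε^{k,±}` are tents of height one: the one of `g_ε^{k,+}` is
centred at `1/k`, that of `g_ε^{k,−}` at `ε`, both of half-width `1/k`. The constants
`c_ε^{k,±}` are `ε⁻¹` divided by the `W`-integrals of these tents over `(0,1]`, which are
positive because `W` is strictly increasing. So `ι_ε^k(u)` is `ε⁻¹` times the fraction of the
first tent's integral lying in `(0,u]`, minus the same for the second tent: past `2/k` the
first fraction is one, below `ε − 1/k` the second is zero, and past `ε + 1/k` it is one. -/

noncomputable def tentDeriv (m h z : ℝ) : ℝ :=
  h⁻¹ * ((Ioc (m - h) m).indicator (fun _ => (1:ℝ)) z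
    - (Ioc m (m + h)).indicator (fun _ => (1:ℝ)) z)

noncomputable def tent (m h y : ℝ) : ℝ :=
  max 0 (h - |y - m|) / h

lemma intervalIntegrable_indicator_Ioc_one (a b c d : ℝ) :
    IntervalIntegrable ((Ioc a b).indicator fun _ => (1:ℝ)) volume c d :=
  ((integrable_indicator_iff measurableSet_Ioc).2
    (integrableOn_const measure_Ioc_lt_top.ne)).intervalIntegrable

lemma intervalIntegral_indicator_Ioc_one (a b : ℝ) {y : ℝ} (hy : 0 ≤ y) :
    ∫ z in (0:ℝ)..y, (Ioc a b).indicator (fun _ => (1:ℝ)) z = max (min b y - max a 0) 0 := by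
  rw [intervalIntegral.integral_of_le hy, integral_indicator measurableSet_Ioc,
    setIntegral_const, measureReal_def, Measure.restrict_apply measurableSet_Ioc,
    Ioc_inter_Ioc, Real.volume_Ioc, smul_eq_mul, mul_one, ENNReal.toReal_ofReal', max_comm]

lemma intervalIntegrable_tentDeriv (m h a b : ℝ) :
    IntervalIntegrable (tentDeriv m h) volume a b :=
  ((intervalIntegrable_indicator_Ioc_one _ _ a b).sub
    (intervalIntegrable_indicator_Ioc_one _ _ a b)).const_mul _

lemma intervalIntegral_tentDeriv {m h y : ℝ} (hm : h ≤ m) (hh : 0 < h) (hy : 0 ≤ y) :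
    ∫ z in (0:ℝ)..y, tentDeriv m h z = tent m h y := by
  unfold tentDeriv
  rw [intervalIntegral.integral_const_mul,
    intervalIntegral.integral_sub (intervalIntegrable_indicator_Ioc_one _ _ _ _)
      (intervalIntegrable_indicator_Ioc_one _ _ _ _),
    intervalIntegral_indicator_Ioc_one _ _ hy, intervalIntegral_indicator_Ioc_one _ _ hy,
    tent, div_eq_inv_mul, max_eq_left (sub_nonneg.2 hm), max_eq_left (hh.le.trans hm)]
  congr 1
  rcases abs_cases (y - m) with ⟨habs, _⟩ | ⟨habs, _⟩ <;> rw [habs] <;>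
    simp only [min_def, max_def] <;> split_ifs <;> linarith

lemma tent_nonneg {m h y : ℝ} (hh : 0 ≤ h) : 0 ≤ tent m h y :=
  div_nonneg (le_max_left _ _) hh

lemma tent_eq_zero {m h y : ℝ} (hy : h ≤ |y - m|) : tent m h y = 0 := by
  rw [tent, max_eq_left (by linarith), zero_div]

lemma tent_pos {m h y : ℝ} (hy : |y - m| < h) : 0 < tent m h y :=
  div_pos (lt_max_of_lt_right (by linarith)) ((abs_nonneg _).trans_lt hy)

lemma continuous_tent (m h : ℝ) : Continuous (tent m h) := by
  unfold tent; fun_prop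

section SetIntegral

variable {μ : Measure ℝ} {m h a u v : ℝ}

lemma setIntegral_Ioc_integral_tentDeriv (hm : h ≤ m) (hh : 0 < h) :
    ∫ y in Ioc 0 u, (∫ z in (0:ℝ)..y, tentDeriv m h z) ∂μ
      = ∫ y in Ioc 0 u, tent m h y ∂μ :=
  setIntegral_congr_fun measurableSet_Ioc fun _ hy => intervalIntegral_tentDeriv hm hh hy.1.le

lemma setIntegral_Ioc_tent_eq_of_le (hu : m + h ≤ u) (huv : u ≤ v) :
    ∫ y in Ioc a v, tent m h y ∂μ = ∫ y in Ioc a u, tent m h y ∂μ :=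
  setIntegral_eq_of_subset_of_forall_sdiff_eq_zero measurableSet_Ioc
    (Ioc_subset_Ioc_right huv) fun y ⟨⟨hay, _⟩, hyu⟩ =>
      tent_eq_zero ((le_abs_self _).trans' (by
        have : u < y := not_le.1 fun hyu' => hyu ⟨hay, hyu'⟩
        linarith))

lemma setIntegral_Ioc_tent_eq_zero (hu : u ≤ m - h) : ∫ y in Ioc a u, tent m h y ∂μ = 0 :=
  setIntegral_eq_zero_of_forall_eq_zero fun y ⟨_, hyu⟩ =>
    tent_eq_zero ((neg_le_abs _).trans' (by linarith))

lemma setIntegral_Ioc_tent_pos [IsFiniteMeasureOnCompacts μ] (hh : 0 < h)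
    (hμ : 0 < μ (Ioc (m - h) m)) (ha : a ≤ m - h) (hb : m ≤ u) :
    0 < ∫ y in Ioc a u, tent m h y ∂μ := by
  rw [setIntegral_pos_iff_support_of_nonneg_ae
    (ae_of_all _ fun y => tent_nonneg hh.le) (continuous_tent m h).integrableOn_Ioc]
  refine hμ.trans_le (measure_mono fun y ⟨hy1, hy2⟩ =>
    ⟨(tent_pos ?_).ne', ha.trans_lt hy1, hy2.trans hb⟩)
  rw [abs_sub_lt_iff]; constructor <;> linarith

end SetIntegral

lemma StieltjesFunction.measure_Ioc_pos {W : StieltjesFunction ℝ} (hW : StrictMono W) {a b : ℝ}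
    (hab : a < b) : 0 < W.measure (Ioc a b) := by
  rw [W.measure_Ioc]
  exact ENNReal.ofReal_pos.2 (sub_pos.2 (hW hab))

lemma gPlus_eq_tentDeriv (k : ℕ) : gPlus k = tentDeriv (1/k) (1/k) := by
  ext z
  rw [gPlus, tentDeriv, sub_self, inv_div, div_one, ← add_div, one_add_one_eq_two]

lemma gMinus_eq_tentDeriv (ε : ℝ) (k : ℕ) : gMinus ε k = tentDeriv ε (1/k) := by
  ext z
  rw [gMinus, tentDeriv, inv_div, div_one]

section Normalization

variable {W : StieltjesFunction ℝ} {ε : ℝ} {k : ℕ}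

lemma cPlus_eq (hk : 0 < (k:ℝ)) :
    cPlus W ε k = ε⁻¹ * (∫ y in Ioc 0 1, tent (1/k) (1/k) y ∂W.measure)⁻¹ := by
  rw [cPlus, gPlus_eq_tentDeriv, setIntegral_Ioc_integral_tentDeriv le_rfl (one_div_pos.2 hk)]

lemma cMinus_eq (hk : 0 < (k:ℝ)) (hkε : 1/(k:ℝ) ≤ ε) :
    cMinus W ε k = ε⁻¹ * (∫ y in Ioc 0 1, tent ε (1/k) y ∂W.measure)⁻¹ := by
  rw [cMinus, gMinus_eq_tentDeriv, setIntegral_Ioc_integral_tentDeriv hkε (one_div_pos.2 hk)]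

lemma iotaK_eq (hk : 0 < (k:ℝ)) (hkε : 1/(k:ℝ) ≤ ε) (u : ℝ) :
    iotaK W ε k u = cPlus W ε k * ∫ y in Ioc 0 u, tent (1/k) (1/k) y ∂W.measure
      - cMinus W ε k * ∫ y in Ioc 0 u, tent ε (1/k) y ∂W.measure := by
  have hprim : ∀ y, 0 ≤ y → ∫ z in (0:ℝ)..y, gEpsK W ε k z
      = cPlus W ε k * tent (1/k) (1/k) y - cMinus W ε k * tent ε (1/k) y := fun y hy => by
    simp only [gEpsK, gPlus_eq_tentDeriv, gMinus_eq_tentDeriv]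
    rw [intervalIntegral.integral_sub ((intervalIntegrable_tentDeriv _ _ _ _).const_mul _)
        ((intervalIntegrable_tentDeriv _ _ _ _).const_mul _),
      intervalIntegral.integral_const_mul, intervalIntegral.integral_const_mul,
      intervalIntegral_tentDeriv le_rfl (one_div_pos.2 hk) hy,
      intervalIntegral_tentDeriv hkε (one_div_pos.2 hk) hy]
  rw [iotaK, setIntegral_congr_fun measurableSet_Ioc fun y hy => hprim y hy.1.le,
    integral_sub (((continuous_tent _ _).integrableOn_Ioc).const_mul _)
      (((continuous_tent _ _).integrableOn_Ioc).const_mul _),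
    integral_const_mul, integral_const_mul]

end Normalization

theorem iotaK_eq_iotaEps_outside_general (W : StieltjesFunction ℝ) (hW : StrictMono W)
    (ε : ℝ) (hε : ε ∈ Set.Ioo (0:ℝ) 1) (k : ℕ) (hk : 1/ε < (k:ℝ)) :
    (∀ u ∈ Set.Ioc (2/(k:ℝ)) (ε - 1/(k:ℝ)), iotaK W ε k u = 1/ε) ∧
    (∀ u ∈ Set.Ioc (ε + 1/(k:ℝ)) 1, iotaK W ε k u = 0) ∧
    (∀ u ∈ Set.Ioc (0:ℝ) 1,
      u ∉ Set.Ioc (0:ℝ) (2/(k:ℝ)) ∪ Set.Ioc (ε - 1/(k:ℝ)) (ε + 1/(k:ℝ)) →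
        iotaK W ε k u = iotaEps ε u) := by
  obtain ⟨hε0, hε1⟩ := hε
  have hk0 : 0 < (k:ℝ) := (one_div_pos.2 hε0).trans hk
  have hkε : 1/(k:ℝ) < ε := (one_div_lt hε0 hk0).1 hk
  have h1k : 0 < 1/(k:ℝ) := one_div_pos.2 hk0
  have h2k : 2/(k:ℝ) = 1/k + 1/k := by ring
  have hA : ∫ y in Ioc 0 1, tent (1/k) (1/k) y ∂W.measure ≠ 0 :=
    (setIntegral_Ioc_tent_pos h1k (W.measure_Ioc_pos hW (by linarith)) (by linarith)
      (by linarith)).ne'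
  have hB : ∫ y in Ioc 0 1, tent ε (1/k) y ∂W.measure ≠ 0 :=
    (setIntegral_Ioc_tent_pos h1k (W.measure_Ioc_pos hW (by linarith)) (by linarith)
      hε1.le).ne'
  have plateau : ∀ u ∈ Ioc (2/(k:ℝ)) (ε - 1/(k:ℝ)), iotaK W ε k u = 1/ε := by
    rintro u ⟨hu, huε⟩
    rw [iotaK_eq hk0 hkε.le, cPlus_eq hk0,
      ← setIntegral_Ioc_tent_eq_of_le (by linarith) (by linarith : u ≤ 1),
      setIntegral_Ioc_tent_eq_zero huε, mul_zero, sub_zero, inv_mul_cancel_right₀ hA, one_div]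
  have beyond : ∀ u ∈ Ioc (ε + 1/(k:ℝ)) 1, iotaK W ε k u = 0 := by
    rintro u ⟨hu, hu1⟩
    rw [iotaK_eq hk0 hkε.le, cPlus_eq hk0, cMinus_eq hk0 hkε.le,
      ← setIntegral_Ioc_tent_eq_of_le (by linarith) hu1,
      ← setIntegral_Ioc_tent_eq_of_le hu.le hu1, inv_mul_cancel_right₀ hA,
      inv_mul_cancel_right₀ hB, sub_self]
  refine ⟨plateau, beyond, fun u ⟨hu0, hu1⟩ hout => ?_⟩
  have hu : 2/(k:ℝ) < u := not_le.1 fun h => hout (Or.inl ⟨hu0, h⟩)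
  rcases le_or_gt u (ε - 1/k) with huε | huε
  · rw [plateau u ⟨hu, huε⟩, iotaEps, indicator_of_mem (mem_Icc.2 ⟨hu0.le, by linarith⟩),
      mul_one, one_div]
  · have hu' : ε + 1/k < u := not_le.1 fun h => hout (Or.inr ⟨huε, h⟩)
    rw [beyond u ⟨hu', hu1⟩, iotaEps,
      indicator_of_notMem fun h : u ∈ Icc 0 ε => by linarith [h.2], mul_zero]

/-- if moreover `k > 3/ε`, then `ι_ε^k = 1/ε` on `(2/k, ε−1/k]`, `ι_ε^k = 0` on
`(ε+1/k, 1]`, and `ι_ε^k` agrees with `ι_ε` on `(0,1]` outside `(0,2/k] ∪ (ε−1/k, ε+1/k]`. -/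
theorem iotaK_eq_iotaEps_outside (W : StieltjesFunction ℝ) (hW : StrictMono W)
    (hWper : ∀ u : ℝ, W (u + 1) - W u = W 1 - W 0)
    (ε : ℝ) (hε : ε ∈ Set.Ioo (0:ℝ) 1) (k : ℕ) (hk : 1/ε < (k:ℝ)) (hk1 : ε + 1/(k:ℝ) < 1)
    (hk3 : 3/ε < (k:ℝ)) :
    (∀ u ∈ Set.Ioc (2/(k:ℝ)) (ε - 1/(k:ℝ)), iotaK W ε k u = 1/ε) ∧
    (∀ u ∈ Set.Ioc (ε + 1/(k:ℝ)) 1, iotaK W ε k u = 0) ∧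
    (∀ u ∈ Set.Ioc (0:ℝ) 1,
      u ∉ Set.Ioc (0:ℝ) (2/(k:ℝ)) ∪ Set.Ioc (ε - 1/(k:ℝ)) (ε + 1/(k:ℝ)) →
        iotaK W ε k u = iotaEps ε u) :=
  iotaK_eq_iotaEps_outside_general W hW ε hε k hk
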